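/- Adequacy of call/cc in the CPS instance: with the double-negation lifting Ā := A⊥⊥ defined from an anti-reduction-closed pole, for any sets of values A (of type τ) and B (of type τ'), and any continuation k ∈ A⊥, the term throw_k := λx. λk'. k x belongs to the set of realizers of A → ¬¬B (i.e., for all v ∈ A and k' ∈ B⊥, throw_k v k' ∈ ⫫); consequently the term cc := λz. λk. z throw_k k satisfies: for every z realizing (A → ¬¬B) → ¬¬A and every k ∈ A⊥, cc z k ∈ ⫫, i.e., cc realizes Peirce's law ((A → ¬¬B) → ¬¬A) → ¬¬A. -/
import Mathlib


/-- λ-terms (de Bruijn); types are left implicit. -/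
inductive Tm : Type
  | var : ℕ → Tm
  | lam : Tm → Tm
  | app : Tm → Tm → Tm

def Tm.lift (d : ℕ) : Tm → Tm
  | .var n => if n < d then .var n else .var (n + 1)
  | .lam t => .lam (t.lift (d + 1))
  | .app t u => .app (t.lift d) (u.lift d)

def Tm.subst : Tm → ℕ → Tm → Tm
  | .var n, k, u => if n < k then .var n else if n = k then u else .var (n - 1)
  | .lam t, k, u => .lam (t.subst (k + 1) (u.lift 0))
  | .app t t', k, u => .app (t.subst k u) (t'.subst k u)

/-- One-step call-by-name β-reduction. -/
inductive Step : Tm → Tm → Prop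
  | beta (t u : Tm) : Step (.app (.lam t) u) (t.subst 0 u)
  | appL {t t' u} : Step t t' → Step (.app t u) (.app t' u)

/-- Orthogonal of a set of terms `A` w.r.t. a pole: the continuations `k` such
that `k p ∈ ⫫` for every `p ∈ A`. -/
def ortho (pole : Set Tm) (A : Set Tm) : Set Tm :=
  {k | ∀ p ∈ A, Tm.app k p ∈ pole}

/-- `q` realizes `¬¬A` iff `q k ∈ ⫫` for every `k ∈ A⊥`. -/
def RealizesNN (pole : Set Tm) (A : Set Tm) (q : Tm) : Prop :=
  ∀ k ∈ ortho pole A, Tm.app q k ∈ pole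

/-- `f` realizes `A → ¬¬B` iff `f v` realizes `¬¬B` for every `v ∈ A`. -/
def RealizesArr (pole : Set Tm) (A B : Set Tm) (f : Tm) : Prop :=
  ∀ v ∈ A, RealizesNN pole B (Tm.app f v)

/-- `z` realizes `(A → ¬¬B) → ¬¬A` iff `z f` realizes `¬¬A` for every `f`
realizing `A → ¬¬B`. -/
def RealizesPeirceHyp (pole : Set Tm) (A B : Set Tm) (z : Tm) : Prop :=
  ∀ f : Tm, RealizesArr pole A B f → RealizesNN pole A (Tm.app z f)

/-- `throw_k := λx. λk'. k x`. -/
def throwTm (k : Tm) : Tm := .lam (.lam (.app ((k.lift 0).lift 0) (.var 1)))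

/-- `cc := λz. λk. z throw_k k`; here `z` is index 1 and `k` is index 0, so the
occurrence of `k` inside `throw` is index 2. -/
def cc : Tm := .lam (.lam (.app (.app (.var 1) (.lam (.lam (.app (.var 2) (.var 1))))) (.var 0)))

lemma subst_lift (t : Tm) : ∀ (d : ℕ) (u : Tm), (t.lift d).subst d u = t := by
  induction t with
  | var n =>
    intro d u
    by_cases h : n < d
    · simp [Tm.lift, Tm.subst, h]
    · have h1 : ¬ (n + 1 < d) := by omega
      have h2 : n + 1 ≠ d := by omega
      simp [Tm.lift, Tm.subst, h, h1, h2]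
  | lam t ih => intro d u; simp [Tm.lift, Tm.subst, ih]
  | app t t' ih ih' => intro d u; simp [Tm.lift, Tm.subst, ih, ih']

lemma lift_lift (t : Tm) : ∀ (e f : ℕ), e ≤ f → (t.lift e).lift (f + 1) = (t.lift f).lift e := by
  induction t with
  | var n =>
    intro e f h
    by_cases h1 : n < e
    · simp [Tm.lift, h1, show n < f + 1 by omega, show n < f by omega]
    · by_cases h2 : n < f
      · simp [Tm.lift, h1, h2, show n + 1 < f + 1 by omega]
      · simp [Tm.lift, h1, h2, show ¬ n + 1 < f + 1 by omega,
          show ¬ n + 1 < e by omega]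
  | lam t ih =>
    intro e f h
    simp [Tm.lift, ih (e+1) (f+1) (by omega)]
  | app t t' ih ih' =>
    intro e f h
    simp [Tm.lift, ih e f h, ih' e f h]

lemma throw_step1 (k v : Tm) :
    Step (Tm.app (throwTm k) v) (.lam (.app (k.lift 0) (v.lift 0))) := by
  have h := Step.beta (Tm.lam (.app ((k.lift 0).lift 0) (.var 1))) v
  have : (Tm.lam (.app ((k.lift 0).lift 0) (.var 1))).subst 0 v
      = Tm.lam (.app (k.lift 0) (v.lift 0)) := by
    have hk : ((k.lift 0).lift 0) = ((k.lift 0).lift 1) := (lift_lift k 0 0 le_rfl).symm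
    simp [Tm.subst, hk, subst_lift]
  rw [this] at h
  exact h

/-- Adequacy of call/cc in the CPS instance: for an anti-reduction-closed pole,
every `k ∈ A⊥` yields `throw_k` realizing `A → ¬¬B`, and consequently `cc`
realizes Peirce's law: for every `z` realizing `(A → ¬¬B) → ¬¬A` and every
`k ∈ A⊥`, `cc z k ∈ ⫫`. -/
theorem callcc_adequacy (pole : Set Tm)
    (hanti : ∀ t t', Step t t' → t' ∈ pole → t ∈ pole) (A B : Set Tm) :
    (∀ k ∈ ortho pole A, RealizesArr pole A B (throwTm k)) ∧
    (∀ z : Tm, RealizesPeirceHyp pole A B z →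
      ∀ k ∈ ortho pole A, Tm.app (Tm.app cc z) k ∈ pole) := by

  have part1 : ∀ k ∈ ortho pole A, RealizesArr pole A B (throwTm k) := by
    intro k hk v hv k' hk'
    have h2 : Step (Tm.app (Tm.lam (.app (k.lift 0) (v.lift 0))) k') (Tm.app k v) := by
      have h := Step.beta (Tm.app (k.lift 0) (v.lift 0)) k'
      have : (Tm.app (k.lift 0) (v.lift 0)).subst 0 k' = Tm.app k v := by
        simp [Tm.subst, subst_lift]
      rwa [this] at h
    exact hanti _ _ (Step.appL (throw_step1 k v))
      (hanti _ _ h2 (hk v hv))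
  refine ⟨part1, ?_⟩
  intro z hz k hk
  have h1 : Step (Tm.app cc z) (.lam (.app (.app (z.lift 0)
      (.lam (.lam (.app (.var 2) (.var 1))))) (.var 0))) := by
    have h := Step.beta (Tm.lam (.app (.app (.var 1)
      (.lam (.lam (.app (.var 2) (.var 1))))) (.var 0))) z
    have heq : (Tm.lam (.app (.app (.var 1)
        (.lam (.lam (.app (.var 2) (.var 1))))) (.var 0))).subst 0 z
        = .lam (.app (.app (z.lift 0)
        (.lam (.lam (.app (.var 2) (.var 1))))) (.var 0)) := by
      simp [Tm.subst]
    rw [heq] at h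
    exact h
  have h2 : Step (Tm.app (.lam (.app (.app (z.lift 0)
      (.lam (.lam (.app (.var 2) (.var 1))))) (.var 0))) k)
      (Tm.app (Tm.app z (throwTm k)) k) := by
    have h := Step.beta (Tm.app (.app (z.lift 0)
      (.lam (.lam (.app (.var 2) (.var 1))))) (.var 0)) k
    have heq : (Tm.app (.app (z.lift 0)
        (.lam (.lam (.app (.var 2) (.var 1))))) (.var 0)).subst 0 k
        = Tm.app (Tm.app z (throwTm k)) k := by
      simp [Tm.subst, subst_lift, throwTm]
    rw [heq] at h
    exact h
  exact hanti _ _ (Step.appL h1)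
    (hanti _ _ h2 (hz (throwTm k) (part1 k hk) k hk))
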